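/- arXiv:2304.09540 — 2 statements merged into one kernel-verified Lean document; each statement's English description precedes it below -/
import Mathlib

section
/- In a tree concept hierarchy with maximum level L, the time-indexed support sets at level ℓ stabilize by time 2L − ℓ: supp_{r,f}(B,ℓ,*) = supp_{r,f}(B,ℓ,2L−ℓ). In particular, every supported concept is supported within time 2L. -/
open scoped Classical
noncomputable section

/-- A concept hierarchy: concepts at levels `0..L`, each concept at level `≥ 1`
has exactly `k` children one level below, level-0 concepts have no children,
there are exactly `k` top-level concepts, and every non-top concept has a parent. -/
structure ConceptHierarchy (α : Type) [DecidableEq α] where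
  L : ℕ
  k : ℕ
  concepts : Finset α
  level : α → ℕ
  children : α → Finset α
  level_le : ∀ c ∈ concepts, level c ≤ L
  children_mem : ∀ c ∈ concepts, ∀ c' ∈ children c, c' ∈ concepts
  children_level : ∀ c ∈ concepts, ∀ c' ∈ children c, level c' + 1 = level c
  children_card : ∀ c ∈ concepts, 1 ≤ level c → (children c).card = k
  children_leaf : ∀ c ∈ concepts, level c = 0 → children c = ∅
  top_card : (concepts.filter (fun c => level c = L)).card = k
  has_parent : ∀ c ∈ concepts, level c < L → ∃ c' ∈ concepts, c ∈ children c'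

namespace ConceptHierarchy

variable {α : Type} [DecidableEq α]

/-- The parents of a concept. -/
def parents (H : ConceptHierarchy α) (c : α) : Finset α :=
  H.concepts.filter (fun c' => c ∈ H.children c')

/-- Limited overlap: each concept at level `≥ 1` shares at most `o·k` children
with the union of the other concepts at the same level. -/
def LimitedOverlap (H : ConceptHierarchy α) (o : ℝ) : Prop :=
  ∀ c ∈ H.concepts, 1 ≤ H.level c →
    (((H.children c).filter (fun d => ∃ c' ∈ H.concepts, c' ≠ c ∧
        H.level c' = H.level c ∧ d ∈ H.children c')).card : ℝ) ≤ o * H.k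

/-- Tree hierarchy: no overlap among child sets of distinct same-level concepts. -/
def IsTree (H : ConceptHierarchy α) : Prop :=
  ∀ c ∈ H.concepts, ∀ c' ∈ H.concepts, H.level c = H.level c' → c ≠ c' →
    Disjoint (H.children c) (H.children c')

/-- Descendant relation: reflexive-transitive closure of the children relation. -/
inductive Desc (H : ConceptHierarchy α) : α → α → Prop
  | refl (c : α) : Desc H c c
  | step {c d e : α} : d ∈ H.children c → Desc H d e → Desc H c e

/-- The level-0 descendants of a concept. -/
def leaves (H : ConceptHierarchy α) (c : α) : Finset α :=
  H.concepts.filter (fun d => H.Desc c d ∧ H.level d = 0)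

/-- Level-indexed bottom-up support sets: `S(0) = B ∩ C₀`,
`S(ℓ) = {c at level ℓ : |children(c) ∩ S(ℓ-1)| ≥ r·k}`. -/
def suppL (H : ConceptHierarchy α) (r : ℝ) (B : Finset α) : ℕ → Finset α
  | 0 => B ∩ H.concepts.filter (fun c => H.level c = 0)
  | (ℓ+1) => H.concepts.filter (fun c => H.level c = ℓ + 1 ∧
      r * H.k ≤ ((H.children c ∩ suppL H r B ℓ).card : ℝ))

/-- `supp_r(B) = ⋃_ℓ S(ℓ)`. -/
def supp (H : ConceptHierarchy α) (r : ℝ) (B : Finset α) : Set α :=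
  ⋃ ℓ, ↑(H.suppL r B ℓ)

/-- Time-and-level-indexed support sets with feedback strength `f`:
`S(0,t) = B`; `S(ℓ,0) = ∅` for `ℓ ≥ 1`; and
`S(ℓ,t) = S(ℓ,t-1) ∪ {c at level ℓ : |children(c) ∩ S(ℓ-1,t-1)| + f·|parents(c) ∩ S(ℓ+1,t-1)| ≥ r·k}`. -/
def suppFB (H : ConceptHierarchy α) (r f : ℝ) (B : Finset α) : ℕ → ℕ → Finset α
  | 0, _ => B
  | (_+1), 0 => ∅
  | (ℓ+1), (t+1) => suppFB H r f B (ℓ+1) t ∪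
      H.concepts.filter (fun c => H.level c = ℓ + 1 ∧
        r * H.k ≤ ((H.children c ∩ suppFB H r f B ℓ t).card : ℝ) +
          f * ((H.parents c ∩ suppFB H r f B (ℓ+2) t).card : ℝ))
  termination_by ℓ t => t

/-- `supp_{r,f}(B,*,t) = ⋃_ℓ S(ℓ,t)`. -/
def suppFBatTime (H : ConceptHierarchy α) (r f : ℝ) (B : Finset α) (t : ℕ) : Set α :=
  ⋃ ℓ, ↑(H.suppFB r f B ℓ t)

/-- `supp_{r,f}(B) = ⋃_{ℓ,t} S(ℓ,t)`. -/
def suppFBSet (H : ConceptHierarchy α) (r f : ℝ) (B : Finset α) : Set α :=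
  ⋃ t, H.suppFBatTime r f B t

end ConceptHierarchy

/-- Feed-forward 0/1 weights: weight 1 from the rep of a child to the rep of its
parent, weight 0 otherwise. -/
def ffWeight {α ν : Type} [DecidableEq α] (H : ConceptHierarchy α) (rep : α → ν)
    (u v : ν) : ℝ :=
  if ∃ c ∈ H.concepts, ∃ c' ∈ H.children c, u = rep c' ∧ v = rep c then 1 else 0

/-- Feedback-network weights: weight 1 upward (rep of child to rep of parent),
weight `f` downward (rep of parent to rep of child), 0 otherwise. -/
def fbWeight {α ν : Type} [DecidableEq α] (H : ConceptHierarchy α) (rep : α → ν)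
    (f : ℝ) (u v : ν) : ℝ :=
  if ∃ c ∈ H.concepts, ∃ c' ∈ H.children c, u = rep c' ∧ v = rep c then 1
  else if ∃ c ∈ H.concepts, ∃ c' ∈ H.children c, u = rep c ∧ v = rep c' then f
  else 0

/-
A concept that enters the support while none of its parents is supported got there on the
strength of its children alone; in a tree each child has that concept as its only parent, so the
same holds for the children, and by induction such a concept is supported without feedback,
hence already by time equal to its level. Stabilisation then runs from the top level down:
level `L` has no parents and settles by time `L`, and once level `ℓ + 1` has settled by time
`2L − ℓ − 1`, every late arrival at level `ℓ` sees, one step after that time, all the parents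
it will ever see and (its parent having been unsupported before) only feedback-free children.
-/

namespace ConceptHierarchy

variable {α : Type} [DecidableEq α] (H : ConceptHierarchy α)

lemma parents_eq_singleton (hTree : H.IsTree) {c d : α} (hc : c ∈ H.concepts)
    (hd : d ∈ H.children c) : H.parents d = {c} := by
  ext p
  simp only [parents, Finset.mem_filter, Finset.mem_singleton]
  constructor
  · rintro ⟨hp, hdp⟩
    by_contra hpc
    have hlevel : H.level c = H.level p := by
      have := H.children_level c hc d hd
      have := H.children_level p hp d hdp
      omega
    exact Finset.disjoint_left.mp (hTree c hc p hp hlevel (Ne.symm hpc)) hd hdp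
  · rintro rfl
    exact ⟨hc, hd⟩

variable (r f : ℝ) (B : Finset α)

@[simp]
lemma suppFB_zero (t : ℕ) : H.suppFB r f B 0 t = B := by
  cases t <;> rw [suppFB]

@[simp]
lemma suppFB_succ_zero (ℓ : ℕ) : H.suppFB r f B (ℓ + 1) 0 = ∅ := by
  rw [suppFB]

lemma mem_suppFB_succ_succ {ℓ t : ℕ} {c : α} :
    c ∈ H.suppFB r f B (ℓ + 1) (t + 1) ↔ c ∈ H.suppFB r f B (ℓ + 1) t ∨
      (c ∈ H.concepts ∧ H.level c = ℓ + 1 ∧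
        r * H.k ≤ ((H.children c ∩ H.suppFB r f B ℓ t).card : ℝ) +
          f * ((H.parents c ∩ H.suppFB r f B (ℓ + 2) t).card : ℝ)) := by
  rw [suppFB, Finset.mem_union, Finset.mem_filter]

lemma suppFB_mono (ℓ : ℕ) : Monotone (H.suppFB r f B ℓ) := by
  refine monotone_nat_of_le_succ fun t c hc => ?_
  cases ℓ with
  | zero => simpa using hc
  | succ ℓ => exact (H.mem_suppFB_succ_succ r f B).mpr (Or.inl hc)

lemma level_of_mem_suppFB {ℓ t : ℕ} {c : α} (hc : c ∈ H.suppFB r f B (ℓ + 1) t) :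
    c ∈ H.concepts ∧ H.level c = ℓ + 1 := by
  induction t with
  | zero => simp at hc
  | succ t ih =>
    rcases (H.mem_suppFB_succ_succ r f B).mp hc with hc | ⟨hcC, hlevel, -⟩
    exacts [ih hc, ⟨hcC, hlevel⟩]

lemma suppFB_eq_empty_of_lt {ℓ : ℕ} (hℓ : H.L < ℓ + 1) (t : ℕ) :
    H.suppFB r f B (ℓ + 1) t = ∅ :=
  Finset.eq_empty_of_forall_notMem fun c hc => by
    obtain ⟨hcC, hlevel⟩ := H.level_of_mem_suppFB r f B hc
    have := H.level_le c hcC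
    omega

lemma mem_suppFB_succ_succ_of_le_card (hf : 0 ≤ f) {ℓ t : ℕ} {c : α} (X Y : Finset α)
    (hc : c ∈ H.concepts) (hlevel : H.level c = ℓ + 1)
    (hX : H.children c ∩ X ⊆ H.suppFB r f B ℓ t)
    (hY : H.parents c ∩ Y ⊆ H.suppFB r f B (ℓ + 2) t)
    (hthreshold : r * H.k ≤ ((H.children c ∩ X).card : ℝ) + f * ((H.parents c ∩ Y).card : ℝ)) :
    c ∈ H.suppFB r f B (ℓ + 1) (t + 1) := by
  have hchildren : (H.children c ∩ X).card ≤ (H.children c ∩ H.suppFB r f B ℓ t).card :=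
    Finset.card_le_card (Finset.subset_inter Finset.inter_subset_left hX)
  have hparents : (H.parents c ∩ Y).card ≤ (H.parents c ∩ H.suppFB r f B (ℓ + 2) t).card :=
    Finset.card_le_card (Finset.subset_inter Finset.inter_subset_left hY)
  refine (H.mem_suppFB_succ_succ r f B).mpr (Or.inr ⟨hc, hlevel, hthreshold.trans ?_⟩)
  gcongr

lemma suppL_subset_suppFB (hf : 0 ≤ f) {ℓ t : ℕ} (hℓt : ℓ ≤ t) :
    H.suppL r B ℓ ⊆ H.suppFB r f B ℓ t := by
  induction ℓ generalizing t with
  | zero => simp [suppL]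
  | succ ℓ ih =>
    obtain ⟨t, rfl⟩ : ∃ s, t = s + 1 := ⟨t - 1, by omega⟩
    intro c hc
    simp only [suppL, Finset.mem_filter] at hc
    obtain ⟨hcC, hlevel, hthreshold⟩ := hc
    refine H.mem_suppFB_succ_succ_of_le_card r f B hf _ ∅ hcC hlevel
      (Finset.inter_subset_right.trans (ih (by omega))) (by simp) ?_
    simpa using hthreshold

lemma mem_suppL_of_disjoint_parents (hTree : H.IsTree) {ℓ t : ℕ} {c : α}
    (hc : c ∈ H.suppFB r f B (ℓ + 1) t)
    (hparents : Disjoint (H.parents c) (H.suppFB r f B (ℓ + 2) t)) :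
    c ∈ H.suppL r B (ℓ + 1) := by
  induction t generalizing ℓ c with
  | zero => simp at hc
  | succ t ih =>
    have hparents_t : Disjoint (H.parents c) (H.suppFB r f B (ℓ + 2) t) :=
      hparents.mono_right (H.suppFB_mono r f B _ t.le_succ)
    by_cases hct : c ∈ H.suppFB r f B (ℓ + 1) t
    · exact ih hct hparents_t
    obtain ⟨hcC, hlevel, hthreshold⟩ := ((H.mem_suppFB_succ_succ r f B).mp hc).resolve_left hct
    have hchildren : H.children c ∩ H.suppFB r f B ℓ t ⊆ H.children c ∩ H.suppL r B ℓ := by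
      refine Finset.subset_inter Finset.inter_subset_left fun d hd => ?_
      obtain ⟨hdc, hdt⟩ := Finset.mem_inter.mp hd
      cases ℓ with
      | zero =>
        have := H.children_level c hcC d hdc
        simp only [suppL, Finset.mem_inter, Finset.mem_filter]
        exact ⟨by simpa using hdt, H.children_mem c hcC d hdc, by omega⟩
      | succ ℓ =>
        refine ih hdt ?_
        rwa [H.parents_eq_singleton hTree hcC hdc, Finset.disjoint_singleton_left]
    rw [Finset.disjoint_iff_inter_eq_empty.mp hparents_t] at hthreshold
    simp only [suppL, Finset.mem_filter]
    refine ⟨hcC, hlevel, ?_⟩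
    calc r * H.k ≤ ((H.children c ∩ H.suppFB r f B ℓ t).card : ℝ) := by simpa using hthreshold
      _ ≤ _ := by exact_mod_cast Finset.card_le_card hchildren

lemma suppFB_subset_succ_of_subset (hTree : H.IsTree) (hf : 0 ≤ f) {ℓ T : ℕ} (hℓT : ℓ ≤ T)
    (habove : ∀ t, H.suppFB r f B (ℓ + 2) t ⊆ H.suppFB r f B (ℓ + 2) T) (t : ℕ) :
    H.suppFB r f B (ℓ + 1) t ⊆ H.suppFB r f B (ℓ + 1) (T + 1) := by
  induction t with
  | zero => simp
  | succ t ih =>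
    intro c hc
    by_cases hct : c ∈ H.suppFB r f B (ℓ + 1) t
    · exact ih hct
    obtain ⟨hcC, hlevel, hthreshold⟩ := ((H.mem_suppFB_succ_succ r f B).mp hc).resolve_left hct
    refine H.mem_suppFB_succ_succ_of_le_card r f B hf _ _ hcC hlevel ?_
      (Finset.inter_subset_right.trans (habove t)) hthreshold
    intro d hd
    obtain ⟨hdc, hdt⟩ := Finset.mem_inter.mp hd
    cases ℓ with
    | zero => simpa using hdt
    | succ ℓ =>
      refine H.suppL_subset_suppFB r f B hf hℓT (H.mem_suppL_of_disjoint_parents r f B hTree hdt ?_)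
      rwa [H.parents_eq_singleton hTree hcC hdc, Finset.disjoint_singleton_left]

lemma suppFB_subset_suppFB_two_mul_sub (hTree : H.IsTree) (hf : 0 ≤ f) (ℓ t : ℕ) :
    H.suppFB r f B ℓ t ⊆ H.suppFB r f B ℓ (2 * H.L - ℓ) := by
  have hsettled : ∀ n ℓ, ℓ + n = H.L →
      ∀ t, H.suppFB r f B (ℓ + 1) t ⊆ H.suppFB r f B (ℓ + 1) (2 * H.L - (ℓ + 1)) := by
    intro n
    induction n with
    | zero => intro ℓ hℓ t; simp [H.suppFB_eq_empty_of_lt r f B (show H.L < ℓ + 1 by omega)]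
    | succ n ih =>
      intro ℓ hℓ t
      rw [show 2 * H.L - (ℓ + 1) = 2 * H.L - (ℓ + 2) + 1 by omega]
      exact H.suppFB_subset_succ_of_subset r f B hTree hf (by omega) (ih (ℓ + 1) (by omega)) t
  rcases ℓ with _ | ℓ
  · simp
  rcases lt_or_ge H.L (ℓ + 1) with hℓ | hℓ
  · simp [H.suppFB_eq_empty_of_lt r f B hℓ]
  · exact hsettled (H.L - ℓ) ℓ (by omega) t

end ConceptHierarchy

theorem tree_stabilize_general {α : Type} [DecidableEq α] (H : ConceptHierarchy α)
    (hTree : H.IsTree) (r f : ℝ) (hf : 0 ≤ f)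
    (B : Finset α) :
    (∀ ℓ : ℕ, (⋃ t : ℕ, (↑(H.suppFB r f B ℓ t) : Set α)) =
        ↑(H.suppFB r f B ℓ (2 * H.L - ℓ))) ∧
    H.suppFBSet r f B = H.suppFBatTime r f B (2 * H.L) := by
  have hsettled := H.suppFB_subset_suppFB_two_mul_sub r f B hTree hf
  refine ⟨fun ℓ => ?_, ?_⟩
  · exact (Set.iUnion_subset fun t => Finset.coe_subset.mpr (hsettled ℓ t)).antisymm
      (Set.subset_iUnion (fun t => (H.suppFB r f B ℓ t : Set α)) _)
  · refine (Set.iUnion_subset fun t => Set.iUnion_subset fun ℓ => ?_).antisymm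
      (Set.subset_iUnion (H.suppFBatTime r f B) _)
    refine Set.subset_iUnion_of_subset ℓ (Finset.coe_subset.mpr ?_)
    exact (hsettled ℓ t).trans (H.suppFB_mono r f B ℓ (Nat.sub_le _ _))

/-- in a tree hierarchy with maximum level `L`, the time-indexed
support sets at level `ℓ` stabilize by time `2L − ℓ`; in particular every
supported concept is supported within time `2L`. -/
theorem tree_stabilize {α : Type} [DecidableEq α] (H : ConceptHierarchy α)
    (hTree : H.IsTree) (r f : ℝ) (hr0 : 0 ≤ r) (hr1 : r ≤ 1) (hf : 0 ≤ f)
    (B : Finset α) (hB : ∀ b ∈ B, H.level b = 0) :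
    (∀ ℓ : ℕ, (⋃ t : ℕ, (↑(H.suppFB r f B ℓ t) : Set α)) =
        ↑(H.suppFB r f B ℓ (2 * H.L - ℓ))) ∧
    H.suppFBSet r f B = H.suppFBatTime r f B (2 * H.L) :=
  tree_stabilize_general H hTree r f hf B
end
end

section
/- The 0/1-weight feed-forward network with threshold τ ∈ [r₁k, r₂k] (r₁,r₂)-recognizes the concept hierarchy: if B is presented at time t, then every concept c ∈ supp_{r₂}(B) has rep(c) fire at time t + level(c), and every concept c ∉ supp_{r₁}(B) has rep(c) not fire at time t + level(c). -/
/-!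
Firing of `rep c` at time `t + level c` is itself a bottom-up threshold support: a concept fires
iff at least `τ` of its children fired one step earlier. Comparing it level by level with
`supp_r(B)`, whose threshold is `r k`, shows that it contains `supp_{r₂}(B)` because `τ ≤ r₂ k`
and is contained in `supp_{r₁}(B)` because `r₁ k ≤ τ`.
-/

open scoped Classical
noncomputable section

namespace ConceptHierarchy

variable {α : Type} [DecidableEq α] (H : ConceptHierarchy α)

/-- `P` holds exactly on the concepts recognized bottom-up from `B` with child-count threshold
`τ`, i.e. on `supp_{τ/k}(B)` when `k ≠ 0`. -/
def IsThresholdSupport (τ : ℝ) (B : Finset α) (P : α → Prop) : Prop :=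
  (∀ c ∈ H.concepts, H.level c = 0 → (P c ↔ c ∈ B)) ∧
  ∀ c ∈ H.concepts, 1 ≤ H.level c → (P c ↔ τ ≤ ((H.children c).filter P).card)

variable {H}

namespace IsThresholdSupport

variable {τ r : ℝ} {B : Finset α} {P : α → Prop}

lemma of_mem_suppL (hP : H.IsThresholdSupport τ B P) (hτ : τ ≤ r * H.k) :
    ∀ ℓ, ∀ c ∈ H.suppL r B ℓ, P c := by
  intro ℓ
  induction ℓ with
  | zero =>
    intro c hc
    simp only [suppL, Finset.mem_inter, Finset.mem_filter] at hc
    exact (hP.1 c hc.2.1 hc.2.2).2 hc.1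
  | succ ℓ ih =>
    intro c hc
    simp only [suppL, Finset.mem_filter] at hc
    obtain ⟨hc, hlev, hcard⟩ := hc
    have hsub : H.children c ∩ H.suppL r B ℓ ⊆ (H.children c).filter P := fun d hd => by
      rw [Finset.mem_inter] at hd
      exact Finset.mem_filter.2 ⟨hd.1, ih d hd.2⟩
    refine (hP.2 c hc (by omega)).2 (hτ.trans (hcard.trans ?_))
    exact_mod_cast Finset.card_le_card hsub

lemma mem_suppL (hP : H.IsThresholdSupport τ B P) (hτ : r * H.k ≤ τ) :
    ∀ ℓ, ∀ c ∈ H.concepts, H.level c = ℓ → P c → c ∈ H.suppL r B ℓ := by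
  intro ℓ
  induction ℓ with
  | zero =>
    intro c hc hlev hPc
    simp only [suppL, Finset.mem_inter, Finset.mem_filter]
    exact ⟨(hP.1 c hc hlev).1 hPc, hc, hlev⟩
  | succ ℓ ih =>
    intro c hc hlev hPc
    have hsub : (H.children c).filter P ⊆ H.children c ∩ H.suppL r B ℓ := fun d hd => by
      rw [Finset.mem_filter] at hd
      have hd_lev := H.children_level c hc d hd.1
      exact Finset.mem_inter.2 ⟨hd.1, ih d (H.children_mem c hc d hd.1) (by omega) hd.2⟩
    have hcount : τ ≤ ((H.children c).filter P).card := (hP.2 c hc (by omega)).1 hPc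
    simp only [suppL, Finset.mem_filter]
    refine ⟨hc, hlev, hτ.trans (hcount.trans ?_)⟩
    exact_mod_cast Finset.card_le_card hsub

lemma supp_subset (hP : H.IsThresholdSupport τ B P) (hτ : τ ≤ r * H.k) :
    H.supp r B ⊆ {c | P c} := by
  intro c hc
  obtain ⟨ℓ, hc⟩ := Set.mem_iUnion.1 hc
  exact hP.of_mem_suppL hτ ℓ c hc

lemma mem_supp (hP : H.IsThresholdSupport τ B P) (hτ : r * H.k ≤ τ) {c : α}
    (hc : c ∈ H.concepts) (hPc : P c) : c ∈ H.supp r B :=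
  Set.mem_iUnion.2 ⟨H.level c, hP.mem_suppL hτ _ c hc rfl hPc⟩

end IsThresholdSupport

end ConceptHierarchy

open ConceptHierarchy

section FeedForward

variable {α ν : Type} [DecidableEq α] {H : ConceptHierarchy α} {rep : α → ν}
  {layer : ν → ℕ}

lemma ffWeight_rep_eq_ite
    (hrep_inj : ∀ c ∈ H.concepts, ∀ c' ∈ H.concepts, rep c = rep c' → c = c')
    {c : α} (hc : c ∈ H.concepts) (v : ν) :
    ffWeight H rep v (rep c) = if v ∈ (H.children c).image rep then 1 else 0 := by
  unfold ffWeight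
  congr 1
  simp only [Finset.mem_image, eq_iff_iff]
  constructor
  · rintro ⟨e, he, d, hd, rfl, hrep⟩
    obtain rfl := hrep_inj e he c hc hrep.symm
    exact ⟨d, hd, rfl⟩
  · rintro ⟨d, hd, rfl⟩
    exact ⟨c, hc, d, hd, rfl, rfl⟩

lemma sum_ffWeight_eq_card_children [Fintype ν]
    (hrep_inj : ∀ c ∈ H.concepts, ∀ c' ∈ H.concepts, rep c = rep c' → c = c')
    (hrep_layer : ∀ c ∈ H.concepts, layer (rep c) = H.level c)
    {c : α} (hc : c ∈ H.concepts) (active : ν → Prop) :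
    ∑ v ∈ Finset.univ.filter (fun v => layer v + 1 = layer (rep c) ∧ active v),
        ffWeight H rep v (rep c) =
      ((H.children c).filter (fun d => active (rep d))).card := by
  simp only [ffWeight_rep_eq_ite hrep_inj hc, Finset.sum_boole, Finset.filter_filter]
  have hset : Finset.univ.filter (fun v => (layer v + 1 = layer (rep c) ∧ active v) ∧
      v ∈ (H.children c).image rep) =
        ((H.children c).filter (fun d => active (rep d))).image rep := by
    ext v
    simp only [Finset.mem_filter, Finset.mem_univ, true_and, Finset.mem_image]
    constructor
    · rintro ⟨⟨-, hv⟩, d, hd, rfl⟩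
      exact ⟨d, ⟨hd, hv⟩, rfl⟩
    · rintro ⟨d, ⟨hd, hv⟩, rfl⟩
      rw [hrep_layer d (H.children_mem c hc d hd), hrep_layer c hc, H.children_level c hc d hd]
      exact ⟨⟨rfl, hv⟩, d, hd, rfl⟩
  rw [hset, Finset.card_image_of_injOn]
  intro d hd e he hde
  exact hrep_inj d (H.children_mem c hc d (Finset.mem_filter.1 hd).1)
    e (H.children_mem c hc e (Finset.mem_filter.1 he).1) hde

lemma ffNetwork_isThresholdSupport [Fintype ν]
    (hrep_inj : ∀ c ∈ H.concepts, ∀ c' ∈ H.concepts, rep c = rep c' → c = c')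
    (hrep_layer : ∀ c ∈ H.concepts, layer (rep c) = H.level c)
    {τ : ℝ} {firing : ν → ℕ → Prop} {B : Finset α} (hB : ∀ b ∈ B, b ∈ H.concepts) {t : ℕ}
    (hpres : ∀ u : ν, layer u = 0 → (firing u t ↔ ∃ b ∈ B, u = rep b))
    (hdyn : ∀ u : ν, 1 ≤ layer u → ∀ s : ℕ, (firing u (s + 1) ↔
        τ ≤ ∑ v ∈ Finset.univ.filter (fun v => layer v + 1 = layer u ∧ firing v s),
          ffWeight H rep v u)) :
    H.IsThresholdSupport τ B (fun c => firing (rep c) (t + H.level c)) := by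
  refine ⟨fun c hc hlev => ?_, fun c hc hlev => ?_⟩ <;> dsimp only
  · rw [hlev, add_zero, hpres (rep c) (by rw [hrep_layer c hc, hlev])]
    constructor
    · rintro ⟨b, hb, hcb⟩
      obtain rfl := hrep_inj c hc b (hB b hb) hcb
      exact hb
    · exact fun hc => ⟨c, hc, rfl⟩
  · obtain ⟨ℓ, hℓ⟩ : ∃ ℓ, H.level c = ℓ + 1 := ⟨H.level c - 1, by omega⟩
    have hchildren : (H.children c).filter (fun d => firing (rep d) (t + ℓ)) =
        (H.children c).filter (fun d => firing (rep d) (t + H.level d)) := by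
      refine Finset.filter_congr fun d hd => ?_
      rw [show H.level d = ℓ by have := H.children_level c hc d hd; omega]
    rw [hℓ, ← add_assoc, hdyn (rep c) (by rw [hrep_layer c hc]; omega),
      sum_ffWeight_eq_card_children hrep_inj hrep_layer hc, hchildren]

end FeedForward

theorem ff_recognizes_general {α ν : Type} [DecidableEq α] [Fintype ν]
    (H : ConceptHierarchy α) (rep : α → ν) (layer : ν → ℕ)
    (hrep_inj : ∀ c ∈ H.concepts, ∀ c' ∈ H.concepts, rep c = rep c' → c = c')
    (hrep_layer : ∀ c ∈ H.concepts, layer (rep c) = H.level c)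
    (r₁ r₂ τ : ℝ)
    (hτ1 : r₁ * H.k ≤ τ) (hτ2 : τ ≤ r₂ * H.k)
    (firing : ν → ℕ → Prop) (B : Finset α)
    (hB : ∀ b ∈ B, b ∈ H.concepts ∧ H.level b = 0) (t : ℕ)
    (hpres : ∀ u : ν, layer u = 0 → (firing u t ↔ ∃ b ∈ B, u = rep b))
    (hdyn : ∀ u : ν, 1 ≤ layer u → ∀ s : ℕ, (firing u (s + 1) ↔
        τ ≤ ∑ v ∈ Finset.univ.filter (fun v => layer v + 1 = layer u ∧ firing v s),
          ffWeight H rep v u)) :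
    (∀ c ∈ H.concepts, c ∈ H.supp r₂ B → firing (rep c) (t + H.level c)) ∧
    (∀ c ∈ H.concepts, c ∉ H.supp r₁ B → ¬ firing (rep c) (t + H.level c)) := by
  have hfires := ffNetwork_isThresholdSupport hrep_inj hrep_layer (fun b hb => (hB b hb).1)
    hpres hdyn
  exact ⟨fun c _ hc => hfires.supp_subset hτ2 hc,
    fun c hc hnot hfire => hnot (hfires.mem_supp hτ1 hc hfire)⟩

/-- the 0/1-weight feed-forward network with threshold
`τ ∈ [r₁k, r₂k]` `(r₁,r₂)`-recognizes the concept hierarchy. -/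
theorem ff_recognizes {α ν : Type} [DecidableEq α] [DecidableEq ν] [Fintype ν]
    (H : ConceptHierarchy α) (rep : α → ν) (layer : ν → ℕ)
    (hrep_inj : ∀ c ∈ H.concepts, ∀ c' ∈ H.concepts, rep c = rep c' → c = c')
    (hrep_layer : ∀ c ∈ H.concepts, layer (rep c) = H.level c)
    (r₁ r₂ τ : ℝ) (hr0 : 0 ≤ r₁) (hr12 : r₁ ≤ r₂) (hr1 : r₂ ≤ 1) (hr2pos : 0 < r₂)
    (hτ1 : r₁ * H.k ≤ τ) (hτ2 : τ ≤ r₂ * H.k)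
    (firing : ν → ℕ → Prop) (B : Finset α)
    (hB : ∀ b ∈ B, b ∈ H.concepts ∧ H.level b = 0) (t : ℕ)
    (hpres : ∀ u : ν, layer u = 0 → (firing u t ↔ ∃ b ∈ B, u = rep b))
    (hdyn : ∀ u : ν, 1 ≤ layer u → ∀ s : ℕ, (firing u (s + 1) ↔
        τ ≤ ∑ v ∈ Finset.univ.filter (fun v => layer v + 1 = layer u ∧ firing v s),
          ffWeight H rep v u)) :
    (∀ c ∈ H.concepts, c ∈ H.supp r₂ B → firing (rep c) (t + H.level c)) ∧
    (∀ c ∈ H.concepts, c ∉ H.supp r₁ B → ¬ firing (rep c) (t + H.level c)) :=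
  ff_recognizes_general H rep layer hrep_inj hrep_layer r₁ r₂ τ hτ1 hτ2 firing B hB t hpres hdyn
end
end
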